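/- Let 𝓔 be a trace-preserving Schwarz map on a unital C*-algebra A with faithful trace τ. Then the fixed point set Fix 𝓔 = {x : 𝓔(x) = x} is a unital C*-subalgebra of A; in particular, if x, y ∈ Fix 𝓔 then xy ∈ Fix 𝓔. -/

import Mathlib

open scoped ComplexOrder

/-!
A Schwarz map is positive, hence star-preserving and continuous. If `E` preserves a faithful
functional `τ`, then `a ≤ b` together with `τ a = τ b` forces `a = b`. At `1` the Schwarz
inequality gives `E 1 ≤ 1`, hence `E 1 = 1`; at a fixed point `v` it gives
`star v * v ≤ E (star v * v)`, hence `E (star v * v) = star v * v`. So the fixed points form a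
star-closed subspace containing `star v * v` with each `v`, and by polarization such a subspace is
closed under products.
-/

def IsSchwarzMap {A B : Type*} [NonUnitalRing A] [StarRing A] [Module ℂ A]
    [NonUnitalRing B] [StarRing B] [PartialOrder B] [Module ℂ B] (E : A →ₗ[ℂ] B) : Prop :=
  ∀ x : A, star (E x) * E x ≤ E (star x * x)

theorem Submodule.mul_mem_of_star_mem_of_star_mul_self_mem {A : Type*} [Ring A] [StarRing A]
    [Algebra ℂ A] [StarModule ℂ A] (M : Submodule ℂ A) (hstar : ∀ x ∈ M, star x ∈ M)
    (hsq : ∀ x ∈ M, star x * x ∈ M) {x y : A} (hx : x ∈ M) (hy : y ∈ M) : x * y ∈ M := by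
  have hxx : x * star x ∈ M := by simpa using hsq _ (hstar x hx)
  have hyy : star y * y ∈ M := hsq y hy
  have hsum : x * y + star y * star x ∈ M := by
    have h := hsq _ (M.add_mem (hstar x hx) hy)
    have hexp : star (star x + y) * (star x + y)
        = x * star x + star y * y + (x * y + star y * star x) := by
      simp only [star_add, star_star]; noncomm_ring
    rw [hexp] at h
    exact (M.add_mem_iff_right (M.add_mem hxx hyy)).mp h
  have hdiff : x * y - star y * star x ∈ M := by
    have h := hsq _ (M.add_mem (hstar x hx) (M.smul_mem Complex.I hy))
    have hexp : star (star x + Complex.I • y) * (star x + Complex.I • y)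
        = x * star x + star y * y + Complex.I • (x * y - star y * star x) := by
      simp only [star_add, star_star, star_smul, RCLike.star_def, Complex.conj_I, neg_smul,
        mul_add, add_mul, neg_mul, smul_mul_assoc, mul_smul_comm, smul_add, smul_neg, smul_smul,
        Complex.I_mul_I, one_smul, neg_neg, smul_sub]
      abel
    rw [hexp] at h
    have hI := (M.add_mem_iff_right (M.add_mem hxx hyy)).mp h
    simpa [smul_smul] using M.smul_mem (-Complex.I) hI
  have h2 : (2 : ℂ) • (x * y) ∈ M := by
    convert M.add_mem hsum hdiff using 1
    rw [two_smul]; abel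
  simpa [smul_smul] using M.smul_mem (1 / 2 : ℂ) h2

theorem eq_of_le_of_map_eq_of_faithful {A : Type*} [AddCommGroup A] [PartialOrder A]
    [IsOrderedAddMonoid A] [Module ℂ A] (τ : A →ₗ[ℂ] ℂ)
    (hfaith : ∀ a : A, 0 ≤ a → τ a = 0 → a = 0) {a b : A} (hab : a ≤ b) (hτ : τ a = τ b) :
    a = b := by
  have h := hfaith (b - a) (sub_nonneg.mpr hab) (by rw [map_sub, hτ, sub_self])
  exact (sub_eq_zero.mp h).symm

namespace IsSchwarzMap

section

variable {A B : Type*} [CStarAlgebra A] [PartialOrder A] [StarOrderedRing A]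
  [CStarAlgebra B] [PartialOrder B] [StarOrderedRing B] {E : A →ₗ[ℂ] B}

theorem map_nonneg (hE : IsSchwarzMap E) {a : A} (ha : 0 ≤ a) : 0 ≤ E a := by
  obtain ⟨b, rfl⟩ := CStarAlgebra.nonneg_iff_eq_star_mul_self.mp ha
  exact (star_mul_self_nonneg (E b)).trans (hE b)

noncomputable def toPositiveLinearMap (hE : IsSchwarzMap E) : A →ₚ[ℂ] B :=
  .mk₀ E fun _ ↦ hE.map_nonneg

theorem map_star (hE : IsSchwarzMap E) (x : A) : E (star x) = star (E x) :=
  StarHomClass.map_star hE.toPositiveLinearMap x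

theorem continuous (hE : IsSchwarzMap E) : Continuous E :=
  map_continuous hE.toPositiveLinearMap

theorem map_one_le_one (hE : IsSchwarzMap E) : E 1 ≤ 1 := by
  have hsa : star (E 1) = E 1 := by rw [← hE.map_star, star_one]
  have hsq : E 1 * E 1 ≤ E 1 := by simpa [hsa] using hE 1
  have hexp : star (1 - E 1) * (1 - E 1) = 1 - E 1 - E 1 + E 1 * E 1 := by
    rw [star_sub, star_one, hsa]; noncomm_ring
  rw [← sub_nonneg]
  calc (0 : B) ≤ star (1 - E 1) * (1 - E 1) := star_mul_self_nonneg _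
    _ = 1 - E 1 - E 1 + E 1 * E 1 := hexp
    _ ≤ 1 - E 1 - E 1 + E 1 := by gcongr
    _ = 1 - E 1 := by abel

end

variable {A : Type*} [CStarAlgebra A] [PartialOrder A] [StarOrderedRing A] {E : A →ₗ[ℂ] A}

theorem map_one_eq_one (hE : IsSchwarzMap E) (τ : A →ₗ[ℂ] ℂ)
    (hfaith : ∀ a : A, 0 ≤ a → τ a = 0 → a = 0) (hEτ : ∀ x : A, τ (E x) = τ x) : E 1 = 1 :=
  eq_of_le_of_map_eq_of_faithful τ hfaith hE.map_one_le_one (hEτ 1)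

theorem map_star_mul_self_eq_of_map_eq (hE : IsSchwarzMap E) (τ : A →ₗ[ℂ] ℂ)
    (hfaith : ∀ a : A, 0 ≤ a → τ a = 0 → a = 0) (hEτ : ∀ x : A, τ (E x) = τ x) {v : A}
    (hv : E v = v) : E (star v * v) = star v * v := by
  have hle : star v * v ≤ E (star v * v) := by simpa only [hv] using hE v
  exact (eq_of_le_of_map_eq_of_faithful τ hfaith hle (hEτ _).symm).symm

end IsSchwarzMap

theorem fixed_points_form_cstar_subalgebra_general {A : Type*}
    [CStarAlgebra A] [PartialOrder A] [StarOrderedRing A]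
    (τ : A →ₗ[ℂ] ℂ)
    (hfaith : ∀ a : A, 0 ≤ a → τ a = 0 → a = 0)
    (E : A →ₗ[ℂ] A)
    (hEtrace : ∀ x : A, τ (E x) = τ x)
    (hSchwarz : ∀ x : A, star (E x) * E x ≤ E (star x * x)) :
    E 1 = 1 ∧
    IsClosed {x : A | E x = x} ∧
    (∀ x : A, E x = x → E (star x) = star x) ∧
    (∀ x y : A, E x = x → E y = y → E (x * y) = x * y) := by
  have hE : IsSchwarzMap E := hSchwarz
  have hstar (x : A) (hx : E x = x) : E (star x) = star x := by rw [hE.map_star, hx]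
  refine ⟨hE.map_one_eq_one τ hfaith hEtrace, isClosed_eq hE.continuous continuous_id, hstar,
    fun x y hx hy ↦ ?_⟩
  exact (E.eqLocus LinearMap.id).mul_mem_of_star_mem_of_star_mul_self_mem hstar
    (fun v hv ↦ hE.map_star_mul_self_eq_of_map_eq τ hfaith hEtrace hv) hx hy

/-- the fixed point set of a trace-preserving Schwarz map on a unital
C*-algebra with faithful trace is a unital (norm-closed, star-closed) C*-subalgebra; in
particular it is closed under multiplication. -/
theorem fixed_points_form_cstar_subalgebra {A : Type*}
    [CStarAlgebra A] [PartialOrder A] [StarOrderedRing A]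
    (τ : A →ₗ[ℂ] ℂ)
    (hpos : ∀ a : A, 0 ≤ a → 0 ≤ τ a)
    (hfaith : ∀ a : A, 0 ≤ a → τ a = 0 → a = 0)
    (htracial : ∀ x y : A, τ (x * y) = τ (y * x))
    (E : A →ₗ[ℂ] A)
    (hEtrace : ∀ x : A, τ (E x) = τ x)
    (hSchwarz : ∀ x : A, star (E x) * E x ≤ E (star x * x)) :
    E 1 = 1 ∧
    IsClosed {x : A | E x = x} ∧
    (∀ x : A, E x = x → E (star x) = star x) ∧
    (∀ x y : A, E x = x → E y = y → E (x * y) = x * y) :=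
  fixed_points_form_cstar_subalgebra_general τ hfaith E hEtrace hSchwarz
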